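/- Let G be the group presented by ⟨x, y | x⁴ = y⁴ = 1, xy = y²x²⟩. Then the quotient obtained by adding the relation yx = x²y² (i.e. ⟨x, y | x⁴ = y⁴ = 1, xy = y²x², yx = x²y²⟩) is cyclic of order 4, while the quotient obtained by adding the relation y⁻¹x⁻¹ = x⁻²y⁻² is isomorphic to G itself (of order 20). -/

import Mathlib

/-- Relators of `G = ⟨x, y | x⁴ = y⁴ = 1, xy = y²x²⟩`, with generator `0` for `x`
and `1` for `y`. -/
def baseRels : Set (FreeGroup (Fin 2)) :=
  {FreeGroup.of 0 ^ 4, FreeGroup.of 1 ^ 4,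
   FreeGroup.of 0 * FreeGroup.of 1 * (FreeGroup.of 1 ^ 2 * FreeGroup.of 0 ^ 2)⁻¹}

/-- The extra α-duality relator `yx = x²y²`. -/
def alphaRel : FreeGroup (Fin 2) :=
  FreeGroup.of 1 * FreeGroup.of 0 * (FreeGroup.of 0 ^ 2 * FreeGroup.of 1 ^ 2)⁻¹

/-- The extra β-duality relator `y⁻¹x⁻¹ = x⁻²y⁻²`. -/
def betaRel : FreeGroup (Fin 2) :=
  (FreeGroup.of 1)⁻¹ * (FreeGroup.of 0)⁻¹ *
    ((FreeGroup.of 0)⁻¹ ^ 2 * (FreeGroup.of 1)⁻¹ ^ 2)⁻¹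

namespace Stmt13Aux

section Generic
variable {G : Type*} [Group G] {x y : G}

lemma keyD (hx : x^4 = 1) (hr : x*y = y^2*x^2) :
    x * y⁻¹ * x = y := by
  have h2 : x^2 = y⁻¹*y⁻¹*(x*y) := by rw [hr]; group
  have h4 : (y⁻¹*y⁻¹*(x*y))*(y⁻¹*y⁻¹*(x*y)) = 1 := by
    rw [← h2]
    calc x^2*x^2 = x^4 := by group
    _ = 1 := hx
  calc x*y⁻¹*x = y*y*((y⁻¹*y⁻¹*(x*y))*(y⁻¹*y⁻¹*(x*y)))*y⁻¹ := by group
  _ = y*y*1*y⁻¹ := by rw [h4]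
  _ = y := by group

lemma keyC (hx : x^4 = 1) (hy : y^4 = 1) (hr : x*y = y^2*x^2) :
    x*y*(x*y) = y*x := by
  have hy3 : y^3 = y⁻¹ := by
    calc y^3 = y^4*y⁻¹ := by group
    _ = y⁻¹ := by rw [hy]; group
  calc x*y*(x*y) = x*(y*(y^2*x^2)) := by rw [← hr]; group
  _ = x*y^3*(x*x) := by simp [pow_succ, mul_assoc]
  _ = x*y⁻¹*x*x := by rw [hy3]; group
  _ = y*x := by rw [keyD hx hr]

lemma keyA5 (hx : x^4 = 1) (hy : y^4 = 1) (hr : x*y = y^2*x^2) :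
    (x*y)^5 = 1 := by
  have h2 : x^2 = y⁻¹*y⁻¹*(x*y) := by rw [hr]; group
  calc (x*y)^5 = (x*y*(x*y))*(x*y*(x*y))*(x*y) := by simp [pow_succ, mul_assoc]
  _ = (y*x)*(y*x)*(x*y) := by rw [keyC hx hy hr]
  _ = y*x*y*x^2*y := by simp [pow_succ, mul_assoc]
  _ = y*x*y*(y⁻¹*y⁻¹*(x*y))*y := by rw [← h2]
  _ = y*(x*y⁻¹*x)*(y*y) := by group
  _ = y*y*(y*y) := by rw [keyD hx hr]
  _ = y^4 := by simp [pow_succ, mul_assoc]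
  _ = 1 := hy

lemma keyXA (hx : x^4 = 1) (hy : y^4 = 1) (hr : x*y = y^2*x^2) :
    x*(x*y) = (x*y)^3*x := by
  symm
  calc (x*y)^3*x = (x*y)*(x*y*(x*y))*x := by simp [pow_succ, mul_assoc]
  _ = (x*y)*(y*x)*x := by rw [keyC hx hy hr]
  _ = x*(y^2*x^2) := by simp [pow_succ, mul_assoc]
  _ = x*(x*y) := by rw [← hr]

end Generic

/-- concrete model: `z ↦ 3z` in the affine group of `ZMod 5`. -/
def x0 : Equiv.Perm (ZMod 5) := ⟨fun z => 3*z, fun z => 2*z, by decide, by decide⟩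
/-- concrete model: `z ↦ 2z+1`. -/
def y0 : Equiv.Perm (ZMod 5) := ⟨fun z => 2*z+1, fun z => 3*z+2, by decide, by decide⟩

def f0 : Fin 2 → Equiv.Perm (ZMod 5) := ![x0, y0]

lemma mem1 : (FreeGroup.of 0 ^ 4 : FreeGroup (Fin 2)) ∈ baseRels := by
  simp [baseRels]
lemma mem2 : (FreeGroup.of 1 ^ 4 : FreeGroup (Fin 2)) ∈ baseRels := by
  simp [baseRels]
lemma mem3 :
    (FreeGroup.of 0 * FreeGroup.of 1 * (FreeGroup.of 1 ^ 2 * FreeGroup.of 0 ^ 2)⁻¹ :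
      FreeGroup (Fin 2)) ∈ baseRels := by
  simp [baseRels]

lemma h0 : ∀ r ∈ baseRels, FreeGroup.lift f0 r = 1 := by
  intro r hr
  simp only [baseRels, Set.mem_insert_iff, Set.mem_singleton_iff] at hr
  rcases hr with rfl | rfl | rfl <;>
    · simp only [map_mul, map_pow, map_inv, FreeGroup.lift_apply_of, f0,
        Matrix.cons_val_zero, Matrix.cons_val_one, Matrix.head_cons]
      decide

lemma g0inj :
    Function.Injective (fun p : Fin 5 × Fin 4 => (x0*y0)^(p.1 : ℕ) * x0^(p.2 : ℕ)) := by
  decide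

section Base

local notation "P" => PresentedGroup baseRels

noncomputable def fP : PresentedGroup baseRels →* Equiv.Perm (ZMod 5) :=
  PresentedGroup.toGroup h0

lemma relP : ∀ r ∈ baseRels, PresentedGroup.mk baseRels r = 1 := fun _ hr =>
  (QuotientGroup.eq_one_iff _).mpr (Subgroup.subset_normalClosure hr)

def xP : PresentedGroup baseRels := PresentedGroup.of 0
def yP : PresentedGroup baseRels := PresentedGroup.of 1

lemma hxP : xP^4 = 1 := by
  have := relP _ mem1
  rwa [map_pow] at this

lemma hyP : yP^4 = 1 := by
  have := relP _ mem2
  rwa [map_pow] at this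

lemma hrP : xP*yP = yP^2*xP^2 := by
  have := relP _ mem3
  rw [map_mul, map_mul, map_inv, map_mul, map_pow, map_pow, mul_inv_eq_one] at this
  exact this

lemma ha5P : (xP*yP)^5 = 1 := keyA5 hxP hyP hrP

lemma hpowP : ∀ k m : ℕ, xP^k*(xP*yP)^m = (xP*yP)^(3^k*m)*xP^k := by
  have hxa : ∀ m : ℕ, xP*(xP*yP)^m = (xP*yP)^(3*m)*xP := by
    intro m
    induction m with
    | zero => simp
    | succ m ih =>
      calc xP*(xP*yP)^(m+1) = xP*(xP*yP)^m*(xP*yP) := by rw [pow_succ, mul_assoc]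
      _ = (xP*yP)^(3*m)*(xP*(xP*yP)) := by rw [ih, mul_assoc]
      _ = (xP*yP)^(3*m)*((xP*yP)^3*xP) := by rw [keyXA hxP hyP hrP]
      _ = (xP*yP)^(3*(m+1))*xP := by rw [← mul_assoc, ← pow_add]; ring_nf
  intro k
  induction k with
  | zero => intro m; simp
  | succ k ih =>
    intro m
    calc xP^(k+1)*(xP*yP)^m = xP*(xP^k*(xP*yP)^m) := by
          rw [pow_succ', mul_assoc]
    _ = xP*((xP*yP)^(3^k*m)*xP^k) := by rw [ih]
    _ = (xP*(xP*yP)^(3^k*m))*xP^k := by rw [mul_assoc]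
    _ = ((xP*yP)^(3*(3^k*m))*xP)*xP^k := by rw [hxa]
    _ = (xP*yP)^(3^(k+1)*m)*xP^(k+1) := by
          rw [mul_assoc, ← pow_succ']
          congr 2
          ring

lemma key : ∀ w : FreeGroup (Fin 2), ∀ i j : ℕ, ∃ i' j' : ℕ,
    (xP*yP)^i * xP^j * PresentedGroup.mk baseRels w = (xP*yP)^i' * xP^j' := by
  have hxshift : ∀ j : ℕ, xP^(j+4) = xP^j := fun j => by
    rw [pow_add, hxP, mul_one]
  have hxmulinv : ∀ j : ℕ, xP^j*xP⁻¹ = xP^(j+3) := by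
    intro j
    rw [← hxshift j, show j+4 = (j+3)+1 from rfl, pow_succ, mul_assoc, mul_inv_cancel, mul_one]
  have hainv : (xP*yP)⁻¹ = (xP*yP)^4 := by
    refine inv_eq_of_mul_eq_one_right ?_
    rw [← pow_succ']
    exact ha5P
  have hyeq : yP = xP⁻¹*(xP*yP) := by group
  have hyinv : yP⁻¹ = (xP*yP)⁻¹*xP := by group
  intro w
  induction w using FreeGroup.induction_on with
  | C1 => intro i j; exact ⟨i, j, by simp⟩
  | of z =>
    fin_cases z
    · intro i j
      refine ⟨i, j+1, ?_⟩
      show (xP*yP)^i * xP^j * xP = _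
      rw [mul_assoc, ← pow_succ]
    · intro i j
      refine ⟨i + 3^(j+3)*1, j+3, ?_⟩
      show (xP*yP)^i * xP^j * yP = _
      calc (xP*yP)^i * xP^j * yP = (xP*yP)^i*(xP^j*xP⁻¹)*(xP*yP)^1 := by
            rw [hyeq, pow_one]; simp [mul_assoc]
      _ = (xP*yP)^i*(xP^(j+3)*(xP*yP)^1) := by rw [hxmulinv, mul_assoc]
      _ = (xP*yP)^i*((xP*yP)^(3^(j+3)*1)*xP^(j+3)) := by rw [hpowP]
      _ = (xP*yP)^(i+3^(j+3)*1)*xP^(j+3) := by rw [← mul_assoc, ← pow_add]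
  | inv_of z _ =>
    fin_cases z
    · intro i j
      refine ⟨i, j+3, ?_⟩
      show (xP*yP)^i * xP^j * xP⁻¹ = _
      rw [mul_assoc, ← hxmulinv]
    · intro i j
      refine ⟨i + 3^j*4, j+1, ?_⟩
      show (xP*yP)^i * xP^j * yP⁻¹ = _
      calc (xP*yP)^i * xP^j * yP⁻¹ = (xP*yP)^i*(xP^j*(xP*yP)^4)*xP := by
            rw [hyinv, hainv]; simp [mul_assoc]
      _ = (xP*yP)^i*((xP*yP)^(3^j*4)*xP^j)*xP := by rw [hpowP]
      _ = (xP*yP)^(i+3^j*4)*xP^(j+1) := by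
            rw [← mul_assoc, ← pow_add, mul_assoc, ← pow_succ]
  | mul w1 w2 ih1 ih2 =>
    intro i j
    rw [map_mul, ← mul_assoc]
    obtain ⟨i1, j1, h1⟩ := ih1 i j
    rw [h1]
    exact ih2 i1 j1

noncomputable def nfP : Fin 5 × Fin 4 → PresentedGroup baseRels :=
  fun q => (xP*yP)^(q.1 : ℕ) * xP^(q.2 : ℕ)

lemma nfP_surj : Function.Surjective nfP := by
  have hared : ∀ n : ℕ, (xP*yP)^n = (xP*yP)^(n % 5) := by
    intro n
    conv_lhs => rw [← Nat.div_add_mod n 5]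
    rw [pow_add, pow_mul, ha5P, one_pow, one_mul]
  have hxred : ∀ n : ℕ, xP^n = xP^(n % 4) := by
    intro n
    conv_lhs => rw [← Nat.div_add_mod n 4]
    rw [pow_add, pow_mul, hxP, one_pow, one_mul]
  intro p
  obtain ⟨w, rfl⟩ := PresentedGroup.mk_surjective baseRels p
  obtain ⟨i, j, h⟩ := key w 0 0
  refine ⟨(⟨i % 5, Nat.mod_lt _ (by norm_num)⟩, ⟨j % 4, Nat.mod_lt _ (by norm_num)⟩), ?_⟩
  show (xP*yP)^(i % 5) * xP^(j % 4) = _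
  rw [← hared, ← hxred, ← h]
  simp

lemma fP_x : fP xP = x0 := by
  show fP (PresentedGroup.of 0) = x0
  rw [fP, PresentedGroup.toGroup.of]
  rfl

lemma fP_y : fP yP = y0 := by
  show fP (PresentedGroup.of 1) = y0
  rw [fP, PresentedGroup.toGroup.of]
  rfl

lemma nfP_inj : Function.Injective nfP := by
  intro q q' h
  apply g0inj
  have : fP (nfP q) = fP (nfP q') := by rw [h]
  simpa only [nfP, map_mul, map_pow, fP_x, fP_y] using this

lemma cardP : Nat.card (PresentedGroup baseRels) = 20 := by
  have := Nat.card_eq_of_bijective nfP ⟨nfP_inj, nfP_surj⟩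
  rw [← this]
  simp

end Base

section Alpha

def aRels : Set (FreeGroup (Fin 2)) := baseRels ∪ {alphaRel}

lemma relQ : ∀ r ∈ aRels, PresentedGroup.mk aRels r = 1 := fun _ hr =>
  (QuotientGroup.eq_one_iff _).mpr (Subgroup.subset_normalClosure hr)

def xQ : PresentedGroup aRels := PresentedGroup.of 0
def yQ : PresentedGroup aRels := PresentedGroup.of 1

lemma hxQ : xQ^4 = 1 := by
  have := relQ _ (Set.mem_union_left _ mem1)
  rwa [map_pow] at this

lemma hyQ : yQ^4 = 1 := by
  have := relQ _ (Set.mem_union_left _ mem2)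
  rwa [map_pow] at this

lemma hrQ : xQ*yQ = yQ^2*xQ^2 := by
  have := relQ _ (Set.mem_union_left _ mem3)
  rw [map_mul, map_mul, map_inv, map_mul, map_pow, map_pow, mul_inv_eq_one] at this
  exact this

lemma haQ : yQ*xQ = xQ^2*yQ^2 := by
  have := relQ _ (Set.mem_union_right _ (Set.mem_singleton alphaRel))
  rw [alphaRel, map_mul, map_mul, map_inv, map_mul, map_pow, map_pow, mul_inv_eq_one] at this
  exact this

lemma hyxQ : yQ = xQ⁻¹ := by
  have h1 : (xQ*yQ)*(yQ*xQ) = 1 := by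
    rw [hrQ, haQ]
    calc (yQ^2*xQ^2)*(xQ^2*yQ^2) = yQ^2*(xQ^2*xQ^2)*yQ^2 := by group
    _ = yQ^2*xQ^4*yQ^2 := by rw [← pow_add]
    _ = yQ^2*yQ^2 := by rw [hxQ]; group
    _ = yQ^4 := by rw [← pow_add]
    _ = 1 := hyQ
  have h2 : yQ*yQ = xQ⁻¹*xQ⁻¹ := by
    calc yQ*yQ = xQ⁻¹*((xQ*yQ)*(yQ*xQ))*xQ⁻¹ := by group
    _ = xQ⁻¹*1*xQ⁻¹ := by rw [h1]
    _ = xQ⁻¹*xQ⁻¹ := by group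
  have hxy1 : xQ*yQ = 1 := by
    rw [hrQ]
    calc yQ^2*xQ^2 = (yQ*yQ)*xQ^2 := by rw [pow_two]
    _ = (xQ⁻¹*xQ⁻¹)*xQ^2 := by rw [h2]
    _ = 1 := by group
  symm
  exact inv_eq_of_mul_eq_one_right hxy1

lemma hgenQ : ∀ q : PresentedGroup aRels, q ∈ Subgroup.zpowers xQ := by
  intro q
  refine PresentedGroup.generated_by _ _ ?_ q
  intro j
  fin_cases j
  · exact Subgroup.mem_zpowers _
  · show yQ ∈ _
    rw [hyxQ]
    exact Subgroup.inv_mem _ (Subgroup.mem_zpowers _)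

lemma cyclicQ : IsCyclic (PresentedGroup aRels) := ⟨⟨xQ, hgenQ⟩⟩

def fQ0 : Fin 2 → Multiplicative (ZMod 4) :=
  ![Multiplicative.ofAdd 1, Multiplicative.ofAdd 3]

lemma hQ0 : ∀ r ∈ aRels, FreeGroup.lift fQ0 r = 1 := by
  intro r hr
  rcases hr with hr | hr
  · simp only [baseRels, Set.mem_insert_iff, Set.mem_singleton_iff] at hr
    rcases hr with rfl | rfl | rfl <;>
      · simp only [map_mul, map_pow, map_inv, FreeGroup.lift_apply_of, fQ0,
          Matrix.cons_val_zero, Matrix.cons_val_one, Matrix.head_cons]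
        decide
  · rw [Set.mem_singleton_iff] at hr
    subst hr
    simp only [alphaRel, map_mul, map_pow, map_inv, FreeGroup.lift_apply_of, fQ0,
      Matrix.cons_val_zero, Matrix.cons_val_one, Matrix.head_cons]
    decide

noncomputable def fQ : PresentedGroup aRels →* Multiplicative (ZMod 4) :=
  PresentedGroup.toGroup hQ0

lemma fQ_x : fQ xQ = Multiplicative.ofAdd 1 := by
  show fQ (PresentedGroup.of 0) = _
  rw [fQ, PresentedGroup.toGroup.of]
  rfl

lemma fQ_inj : Function.Injective fQ := by
  rw [injective_iff_map_eq_one]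
  intro q hq
  obtain ⟨n, rfl⟩ := Subgroup.mem_zpowers_iff.mp (hgenQ q)
  rw [map_zpow, fQ_x] at hq
  rw [← ofAdd_zsmul, ofAdd_eq_one, zsmul_eq_mul, mul_one] at hq
  obtain ⟨k, rfl⟩ := (ZMod.intCast_zmod_eq_zero_iff_dvd n 4).mp hq
  have h4 : xQ^((4:ℕ):ℤ) = 1 := by rw [zpow_natCast, hxQ]
  rw [zpow_mul, h4, one_zpow]

lemma fQ_surj : Function.Surjective fQ := by
  have hsur : ∀ z : Multiplicative (ZMod 4),
      ∃ n : Fin 4, (Multiplicative.ofAdd (1 : ZMod 4))^(n:ℕ) = z := by decide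
  intro z
  obtain ⟨n, hn⟩ := hsur z
  exact ⟨xQ^(n:ℕ), by rw [map_pow, fQ_x, hn]⟩

lemma cardQ : Nat.card (PresentedGroup aRels) = 4 := by
  have e := MulEquiv.ofBijective fQ ⟨fQ_inj, fQ_surj⟩
  rw [Nat.card_congr e.toEquiv, Nat.card_congr Multiplicative.toAdd,
    Nat.card_eq_fintype_card]
  rfl

end Alpha

section Beta

lemma nclBeta :
    Subgroup.normalClosure (baseRels ∪ {betaRel}) = Subgroup.normalClosure baseRels := by
  apply le_antisymm
  · apply Subgroup.normalClosure_le_normal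
    intro r hr
    rcases hr with hr | hr
    · exact Subgroup.subset_normalClosure hr
    · rw [Set.mem_singleton_iff] at hr
      subst hr
      have h3 : (FreeGroup.of 0 * FreeGroup.of 1 * (FreeGroup.of 1^2*FreeGroup.of 0^2)⁻¹ :
          FreeGroup (Fin 2)) ∈ Subgroup.normalClosure baseRels :=
        Subgroup.subset_normalClosure mem3
      have h4 : betaRel = ((FreeGroup.of 1)⁻¹*(FreeGroup.of 0)⁻¹) *
          (FreeGroup.of 0 * FreeGroup.of 1 * (FreeGroup.of 1^2*FreeGroup.of 0^2)⁻¹)⁻¹ *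
          ((FreeGroup.of 1)⁻¹*(FreeGroup.of 0)⁻¹)⁻¹ := by
        rw [betaRel]; group
      rw [h4]
      exact Subgroup.Normal.conj_mem inferInstance _
        (Subgroup.inv_mem _ h3) _
  · exact Subgroup.normalClosure_mono Set.subset_union_left

noncomputable def betaEquiv :
    PresentedGroup (baseRels ∪ {betaRel}) ≃* PresentedGroup baseRels :=
  QuotientGroup.quotientMulEquivOfEq nclBeta

end Beta

end Stmt13Aux

/-- For `G = ⟨x, y | x⁴ = y⁴ = 1, xy = y²x²⟩` (of order 20): adding the relation
`yx = x²y²` yields a cyclic group of order 4, while adding the relation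
`y⁻¹x⁻¹ = x⁻²y⁻²` yields a group isomorphic to `G` itself. -/
theorem stmt_13 :
    Nat.card (PresentedGroup baseRels) = 20 ∧
    IsCyclic (PresentedGroup (baseRels ∪ {alphaRel})) ∧
    Nat.card (PresentedGroup (baseRels ∪ {alphaRel})) = 4 ∧
    Nonempty (PresentedGroup (baseRels ∪ {betaRel}) ≃* PresentedGroup baseRels) :=
  ⟨Stmt13Aux.cardP, Stmt13Aux.cyclicQ, Stmt13Aux.cardQ, ⟨Stmt13Aux.betaEquiv⟩⟩
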